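/- arXiv:2105.07860 — 5 statements merged into one kernel-verified Lean document; each statement's English description precedes it below -/
import Mathlib

section
/- For p = 3 and L = k[t]/(t^3 − ω), the map Der_k(L) → sl_2(k) sending (a + bt + ct^2)∂ to the matrix (b a; −c −b) is a linear bijection that respects the Lie bracket and the 3-map. -/
/-- `L = k[t]/(t³ - ω)` in characteristic 3. -/
noncomputable abbrev L3 (k : Type*) [Field k] (ω : k) : Type _ :=
  AdjoinRoot (Polynomial.X ^ 3 - Polynomial.C ω)

/-- The derivation `(a + bt + ct²)∂` of `L = k[t]/(t³ - ω)` as a `k`-linear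
endomorphism, where `E = ∂` is the derivation with `∂(t) = 1`. -/
noncomputable def D3 {k : Type*} [Field k] (ω : k)
    (E : Derivation k (L3 k ω) (L3 k ω)) (a b c : k) : L3 k ω →ₗ[k] L3 k ω :=
  (algebraMap k (L3 k ω) a
    + algebraMap k (L3 k ω) b * AdjoinRoot.root (Polynomial.X ^ 3 - Polynomial.C ω)
    + algebraMap k (L3 k ω) c
        * AdjoinRoot.root (Polynomial.X ^ 3 - Polynomial.C ω) ^ 2)
    • E.toLinearMap

/-- The matrix `(b a; -c -b) ∈ sl₂(k)` associated to `(a + bt + ct²)∂`. -/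
def M3 {k : Type*} [Field k] (a b c : k) : Matrix (Fin 2) (Fin 2) k :=
  !![b, a; -c, -b]

/-! Every derivation of `L = k[t]/(t³ - ω)` is `D(t) • ∂`, and `1, t, t²` is a `k`-basis of
`L`, so `(a, b, c) ↦ (a + bt + ct²)∂` is bijective. For `f = a + bt + ct²` we have
`∂f = b - ct` since `2 = -1`, and `[f∂, g∂] = (f ∂g - g ∂f)∂` is then a direct computation.
For the cube, Hochschild's formula `(f∂)³ = f³∂³ + (f∂)²(f) ∂` in characteristic 3, together
with `∂³ = 0`, gives `(f∂)³ = (b² - ac) • f∂`; on the matrix side `M = (b a; -c -b)` is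
traceless of determinant `ac - b²`, so `M² = (b² - ac) • 1` by Cayley–Hamilton and
`M³ = (b² - ac) • M`. -/

theorem PowerBasis.existsUnique_eq_add_mul_add_mul_sq {R S : Type*} [CommRing R] [Ring S]
    [Algebra R S] (pb : PowerBasis R S) (h : pb.dim = 3) (x : S) :
    ∃! v : R × R × R,
      x = algebraMap R S v.1 + algebraMap R S v.2.1 * pb.gen
        + algebraMap R S v.2.2 * pb.gen ^ 2 := by
  obtain ⟨gen, dim, basis, basis_eq_pow⟩ := pb
  subst h
  have hcoords : ∀ a b c : R, algebraMap R S a + algebraMap R S b * gen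
      + algebraMap R S c * gen ^ 2 = basis.equivFun.symm ![a, b, c] := by
    intro a b c
    simp [Module.Basis.equivFun_symm_apply, Fin.sum_univ_three, basis_eq_pow, Algebra.smul_def]
  refine ⟨(basis.repr x 0, basis.repr x 1, basis.repr x 2), ?_, fun v hx => ?_⟩
  · dsimp only
    rw [hcoords, eq_comm, LinearEquiv.symm_apply_eq]
    ext i; fin_cases i <;> rfl
  · have hv : basis.equivFun x = ![v.1, v.2.1, v.2.2] := by
      rw [hx, hcoords, LinearEquiv.apply_symm_apply]
    simp only [← Module.Basis.equivFun_apply, hv]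
    rfl

namespace Derivation

variable {R A : Type*} [CommRing R] [CommRing A] [Algebra R A] (E : Derivation R A A)

theorem commutator_smul_smul (f g : A) :
    (f • E.toLinearMap) * (g • E.toLinearMap) - (g • E.toLinearMap) * (f • E.toLinearMap)
      = (f * E g - g * E f) • E.toLinearMap := by
  ext z
  simp only [LinearMap.sub_apply, Module.End.mul_apply, LinearMap.smul_apply, smul_eq_mul,
    coeFn_coe, leibniz]
  ring

theorem smul_pow_three (h3 : (3 : A) = 0) (f : A) :
    (f • E.toLinearMap) ^ 3
      = f ^ 3 • E.toLinearMap ^ 3 + (f * (E f ^ 2 + f * E (E f))) • E.toLinearMap := by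
  ext z
  simp only [pow_three, Module.End.mul_apply, LinearMap.add_apply, LinearMap.smul_apply,
    smul_eq_mul, coeFn_coe, leibniz, map_add]
  linear_combination (f ^ 2 * E f * E (E z)) * h3

theorem toLinearMap_eq_smul_iff {t : A} (ht : Algebra.adjoin R {t} = ⊤) (hE : E t = 1)
    (D : Derivation R A A) (f : A) : D.toLinearMap = f • E.toLinearMap ↔ D t = f := by
  refine ⟨fun h => by simpa [hE] using LinearMap.congr_fun h t, fun h => ?_⟩
  rw [← coe_smul_linearMap]
  congr 1
  refine ext_of_adjoin_eq_top {t} ht fun _ hy => ?_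
  rw [Set.mem_singleton_iff.mp hy, smul_apply, hE, smul_eq_mul, mul_one, h]

end Derivation

open Polynomial

namespace L3

variable {k : Type*} [Field k] (ω : k)

noncomputable def ofCoeffs (a b c : k) : L3 k ω :=
  algebraMap k _ a + algebraMap k _ b * AdjoinRoot.root (X ^ 3 - C ω)
    + algebraMap k _ c * AdjoinRoot.root (X ^ 3 - C ω) ^ 2

theorem existsUnique_eq_ofCoeffs (x : L3 k ω) :
    ∃! v : k × k × k, x = ofCoeffs ω v.1 v.2.1 v.2.2 :=
  (AdjoinRoot.powerBasis' (monic_X_pow_sub_C ω three_ne_zero)).existsUnique_eq_add_mul_add_mul_sq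
    (natDegree_X_pow_sub_C) x

theorem ofCoeffs_zero : ofCoeffs ω 0 0 0 = 0 := by
  simp [ofCoeffs]

theorem algebraMap_mul_ofCoeffs (s a b c : k) :
    algebraMap k _ s * ofCoeffs ω a b c = ofCoeffs ω (s * a) (s * b) (s * c) := by
  simp only [ofCoeffs, map_mul]
  ring

variable [CharP k 3]

theorem three_eq_zero : (3 : L3 k ω) = 0 := by
  have h := map_natCast (algebraMap k (L3 k ω)) 3
  rw [CharP.cast_eq_zero, map_zero] at h
  exact_mod_cast h.symm

theorem ofCoeffs_mul_sub_mul (a b c a' b' c' : k) :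
    ofCoeffs ω a b c * ofCoeffs ω b' (-c') 0 - ofCoeffs ω a' b' c' * ofCoeffs ω b (-c) 0
      = ofCoeffs ω (a * b' - a' * b) (a' * c - a * c') (b * c' - b' * c) := by
  simp only [ofCoeffs, map_mul, map_sub, map_neg, map_zero]
  linear_combination (algebraMap k _ b' * algebraMap k _ c - algebraMap k _ b * algebraMap k _ c')
    * AdjoinRoot.root (X ^ 3 - C ω) ^ 2 * three_eq_zero ω

theorem ofCoeffs_sq_add_mul (a b c : k) :
    ofCoeffs ω b (-c) 0 ^ 2 + ofCoeffs ω a b c * ofCoeffs ω (-c) 0 0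
      = algebraMap k _ (b ^ 2 - a * c) := by
  simp only [ofCoeffs, map_mul, map_sub, map_neg, map_zero, map_pow]
  linear_combination (- algebraMap k _ b * algebraMap k _ c * AdjoinRoot.root (X ^ 3 - C ω))
    * three_eq_zero ω

variable {ω} {E : Derivation k (L3 k ω) (L3 k ω)} (hE : E (AdjoinRoot.root (X ^ 3 - C ω)) = 1)
include hE

theorem derivation_ofCoeffs (a b c : k) : E (ofCoeffs ω a b c) = ofCoeffs ω b (-c) 0 := by
  simp only [ofCoeffs, map_add, Derivation.leibniz, Derivation.leibniz_pow,
    Derivation.map_algebraMap, hE, map_neg, map_zero, smul_eq_mul]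
  linear_combination (algebraMap k _ c * AdjoinRoot.root (X ^ 3 - C ω)) * three_eq_zero ω

theorem derivation_pow_three : E.toLinearMap ^ 3 = 0 := by
  ext x
  obtain ⟨⟨a, b, c⟩, rfl, -⟩ := existsUnique_eq_ofCoeffs ω x
  simp [pow_three, derivation_ofCoeffs hE, ofCoeffs_zero]

end L3

theorem D3_eq_smul {k : Type*} [Field k] (ω : k) (E : Derivation k (L3 k ω) (L3 k ω))
    (a b c : k) : D3 ω E a b c = L3.ofCoeffs ω a b c • E.toLinearMap :=
  rfl

section

variable {k : Type*} [Field k] [CharP k 3] {ω : k} {E : Derivation k (L3 k ω) (L3 k ω)}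
  (hE : E (AdjoinRoot.root (X ^ 3 - C ω)) = 1)
include hE

theorem D3_mul_sub_mul (a b c a' b' c' : k) :
    D3 ω E a b c * D3 ω E a' b' c' - D3 ω E a' b' c' * D3 ω E a b c
      = D3 ω E (a * b' - a' * b) (a' * c - a * c') (b * c' - b' * c) := by
  simp only [D3_eq_smul]
  rw [Derivation.commutator_smul_smul, L3.derivation_ofCoeffs hE, L3.derivation_ofCoeffs hE,
    L3.ofCoeffs_mul_sub_mul]

theorem D3_pow_three (a b c : k) :
    D3 ω E a b c ^ 3
      = D3 ω E ((b ^ 2 - a * c) * a) ((b ^ 2 - a * c) * b) ((b ^ 2 - a * c) * c) := by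
  simp only [D3_eq_smul]
  rw [Derivation.smul_pow_three E (L3.three_eq_zero ω), L3.derivation_pow_three hE, smul_zero,
    zero_add, L3.derivation_ofCoeffs hE, L3.derivation_ofCoeffs hE, neg_zero,
    L3.ofCoeffs_sq_add_mul, mul_comm, L3.algebraMap_mul_ofCoeffs]

end

section

variable {k : Type*} [Field k]

theorem M3_mul_sub_mul [CharP k 3] (a b c a' b' c' : k) :
    M3 a b c * M3 a' b' c' - M3 a' b' c' * M3 a b c
      = M3 (a * b' - a' * b) (a' * c - a * c') (b * c' - b' * c) := by
  have h3 : (3 : k) = 0 := CharP.ofNat_eq_zero k 3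
  ext i j
  fin_cases i <;> fin_cases j <;> simp [M3]
  · ring
  · linear_combination (a' * b - a * b') * h3
  · linear_combination (b * c' - b' * c) * h3
  · ring

theorem M3_sq (a b c : k) : M3 a b c ^ 2 = (b ^ 2 - a * c) • 1 := by
  ext i j
  fin_cases i <;> fin_cases j <;> simp [M3, sq] <;> ring

theorem M3_pow_three (a b c : k) :
    M3 a b c ^ 3 = M3 ((b ^ 2 - a * c) * a) ((b ^ 2 - a * c) * b) ((b ^ 2 - a * c) * c) := by
  rw [pow_succ, M3_sq, smul_one_mul]
  ext i j
  fin_cases i <;> fin_cases j <;> simp [M3]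

end

/-- For `p = 3` and `L = k[t]/(t³ - ω)`, the map `(a + bt + ct²)∂ ↦ (b a; -c -b)`
is a linear bijection `Der_k(L) → sl₂(k)` respecting the Lie bracket and the 3-map. -/
theorem stmt7 {k : Type*} [Field k] [CharP k 3] (ω : k)
    (E : Derivation k (L3 k ω) (L3 k ω))
    (hE : E (AdjoinRoot.root (Polynomial.X ^ 3 - Polynomial.C ω)) = 1) :
    (∀ D : Derivation k (L3 k ω) (L3 k ω),
        ∃! abc : k × k × k, D.toLinearMap = D3 ω E abc.1 abc.2.1 abc.2.2) ∧
    (∀ a b c a' b' c' : k, ∃ a'' b'' c'' : k,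
        D3 ω E a b c * D3 ω E a' b' c' - D3 ω E a' b' c' * D3 ω E a b c
          = D3 ω E a'' b'' c'' ∧
        M3 a'' b'' c'' = M3 a b c * M3 a' b' c' - M3 a' b' c' * M3 a b c) ∧
    (∀ a b c : k, ∃ a'' b'' c'' : k,
        D3 ω E a b c ^ 3 = D3 ω E a'' b'' c'' ∧
        M3 a'' b'' c'' = M3 a b c ^ 3) := by
  refine ⟨fun D => ?_,
    fun a b c a' b' c' =>
      ⟨_, _, _, D3_mul_sub_mul hE a b c a' b' c', (M3_mul_sub_mul a b c a' b' c').symm⟩,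
    fun a b c => ⟨_, _, _, D3_pow_three hE a b c, (M3_pow_three a b c).symm⟩⟩
  exact (existsUnique_congr fun _ =>
    E.toLinearMap_eq_smul_iff AdjoinRoot.adjoinRoot_eq_top hE D _).mpr
      (L3.existsUnique_eq_ofCoeffs ω (D (AdjoinRoot.root _)))
end

section
/- Let k be a field of characteristic p > 0 and let F(s,t) = Σ_{i=1}^{p−1} Σ_{j=0}^{p−1} λ_{ij} s^j t^i ∈ k[s,t] satisfy ∂F/∂s + ∂F/∂t = 0. Then F = 0, i.e., all coefficients λ_{ij} vanish. -/
/-!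
Comparing the coefficients of `s^a t^b` in `∂F/∂s + ∂F/∂t = 0` gives
`(b + 1) λ_{b+1,a} = -(a + 1) λ_{b,a+1}`. Since `F` has no terms free of `t` and `b + 1` is
invertible in `k` for `b + 1 < p`, induction on the `t`-degree kills every coefficient.
-/

open MvPolynomial Finsupp

namespace MvPolynomial

variable {R : Type*} [CommRing R]

lemma coeff_sum_sum_C_mul_X_pow_mul_X_pow (S T : Finset ℕ) (c : ℕ → ℕ → R) (a b : ℕ) :
    coeff (single 0 a + single 1 b)
        (∑ i ∈ T, ∑ j ∈ S, C (c i j) * X 0 ^ j * X 1 ^ i : MvPolynomial (Fin 2) R) =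
      if b ∈ T ∧ a ∈ S then c b a else 0 := by
  have hmonomial : ∀ i j, (C (c i j) * X 0 ^ j * X 1 ^ i : MvPolynomial (Fin 2) R) =
      monomial (single 0 j + single 1 i) (c i j) := by
    intro i j
    rw [mul_assoc, X_pow_eq_monomial, X_pow_eq_monomial, monomial_mul, C_mul_monomial, one_mul,
      mul_one]
  have hexponent : ∀ i j,
      single (0 : Fin 2) j + single 1 i = single 0 a + single 1 b ↔ i = b ∧ j = a := by
    intro i j
    refine ⟨fun h => ⟨by simpa using DFunLike.congr_fun h 1, by simpa using DFunLike.congr_fun h 0⟩,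
      ?_⟩
    rintro ⟨rfl, rfl⟩
    rfl
  simp only [hmonomial, coeff_sum, coeff_monomial, hexponent, ite_and, Finset.sum_ite_irrel,
    Finset.sum_const_zero, Finset.sum_ite_eq']

lemma coeff_mul_succ_eq_neg_of_pderiv_add_pderiv_eq_zero {F : MvPolynomial (Fin 2) R}
    (hF : pderiv 0 F + pderiv 1 F = 0) (a b : ℕ) :
    coeff (single 0 a + single 1 (b + 1)) F * (b + 1) =
      -(coeff (single 0 (a + 1) + single 1 b) F * (a + 1)) := by
  have hab := congrArg (coeff (single 0 a + single 1 b)) hF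
  rw [coeff_add, coeff_pderiv, coeff_pderiv, coeff_zero, add_right_comm, ← single_add, add_assoc,
    ← single_add] at hab
  simpa [eq_neg_iff_add_eq_zero, add_comm] using hab

lemma coeff_eq_zero_of_pderiv_add_pderiv_eq_zero [NoZeroDivisors R] (p : ℕ) [CharP R p]
    {F : MvPolynomial (Fin 2) R} (hF : pderiv 0 F + pderiv 1 F = 0)
    (hF₀ : ∀ a, coeff (single 0 a + single 1 0) F = 0) {b : ℕ} (hb : b < p) (a : ℕ) :
    coeff (single 0 a + single 1 b) F = 0 := by
  induction b generalizing a with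
  | zero => exact hF₀ a
  | succ b ih =>
    have hb_ne_zero : (b + 1 : R) ≠ 0 := by
      exact_mod_cast (CharP.cast_eq_zero_iff R p (b + 1)).not.mpr
        (Nat.not_dvd_of_pos_of_lt b.succ_pos hb)
    have hrec := coeff_mul_succ_eq_neg_of_pderiv_add_pderiv_eq_zero hF a b
    rw [ih (by omega) (a + 1), zero_mul, neg_zero] at hrec
    exact (mul_eq_zero.mp hrec).resolve_right hb_ne_zero

end MvPolynomial

open MvPolynomial in
theorem stmt9_general {k : Type*} [Field k] (p : ℕ) [CharP k p]
    (lam : ℕ → ℕ → k) (F : MvPolynomial (Fin 2) k)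
    (hF : F = ∑ i ∈ Finset.Ico 1 p, ∑ j ∈ Finset.range p,
      MvPolynomial.C (lam i j) * MvPolynomial.X 0 ^ j * MvPolynomial.X 1 ^ i)
    (hd : MvPolynomial.pderiv 0 F + MvPolynomial.pderiv 1 F = 0) :
    ∀ i ∈ Finset.Ico 1 p, ∀ j ∈ Finset.range p, lam i j = 0 := by
  have hcoeff : ∀ a b, coeff (single 0 a + single 1 b) F =
      if b ∈ Finset.Ico 1 p ∧ a ∈ Finset.range p then lam b a else 0 := by
    subst hF
    exact coeff_sum_sum_C_mul_X_pow_mul_X_pow _ _ lam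
  intro i hi j hj
  have hzero := coeff_eq_zero_of_pderiv_add_pderiv_eq_zero p hd
    (fun a => by rw [hcoeff, if_neg (by simp)]) (Finset.mem_Ico.mp hi).2 j
  rwa [hcoeff, if_pos ⟨hi, hj⟩] at hzero

open MvPolynomial in
/-- Let `F(s,t) = Σ_{i=1}^{p-1} Σ_{j=0}^{p-1} λ_{ij} s^j t^i` (here `s = X 0`, `t = X 1`)
be a polynomial over a field of characteristic `p` with `∂F/∂s + ∂F/∂t = 0`.
Then all coefficients `λ_{ij}` vanish. -/
theorem stmt9 {k : Type*} [Field k] (p : ℕ) [Fact p.Prime] [CharP k p]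
    (lam : ℕ → ℕ → k) (F : MvPolynomial (Fin 2) k)
    (hF : F = ∑ i ∈ Finset.Ico 1 p, ∑ j ∈ Finset.range p,
      MvPolynomial.C (lam i j) * MvPolynomial.X 0 ^ j * MvPolynomial.X 1 ^ i)
    (hd : MvPolynomial.pderiv 0 F + MvPolynomial.pderiv 1 F = 0) :
    ∀ i ∈ Finset.Ico 1 p, ∀ j ∈ Finset.range p, lam i j = 0 :=
  stmt9_general p lam F hF hd
end

section
/- Let k be a field of characteristic p, L = k[t]/(t^p − ω), and let g ∈ Aut_k(L) with inverse corresponding to the substitution t ↦ φ(t). Then the formal derivative φ'(t) is a unit in L, and the adjoint action on a derivation f(t)∂ is given by Ad_g(f(t)∂) = (f(φ(t))/φ'(t))·∂. -/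
/-!
A derivation of `k[t]/(f)` is determined by its value at `t`, so every derivation is
`D(t) • ∂`. Applying `Ad_g ∂` to `g⁻¹ t = φ(t)` gives `1 = φ'(t) · (Ad_g ∂)(t)` by the
chain rule, so `φ'(t)` is a unit with inverse `(Ad_g ∂)(t)`, and
`Ad_g D = Ad_g (D(t) • ∂) = g⁻¹(D t) • Ad_g ∂ = g⁻¹(D t) · φ'(t)⁻¹ • ∂`.
-/

/-- `L = k[t]/(t^p - ω)`. -/
noncomputable abbrev Lp (k : Type*) [Field k] (p : ℕ) (ω : k) : Type _ :=
  AdjoinRoot (Polynomial.X ^ p - Polynomial.C ω)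

open Polynomial

namespace Derivation

variable {R A : Type*} [CommRing R] [CommRing A] [Algebra R A]

/-- `Ad_g D = g⁻¹ ∘ D ∘ g`. -/
def conj (D : Derivation R A A) (g : A ≃ₐ[R] A) : Derivation R A A where
  toLinearMap := g.symm.toLinearMap ∘ₗ D.toLinearMap ∘ₗ g.toLinearMap
  map_one_eq_zero' := by simp
  leibniz' a b := by simp [Derivation.leibniz, smul_eq_mul]

@[simp]
lemma conj_apply (D : Derivation R A A) (g : A ≃ₐ[R] A) (x : A) :
    D.conj g x = g.symm (D (g x)) := rfl

lemma conj_smul (D : Derivation R A A) (g : A ≃ₐ[R] A) (a : A) :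
    (a • D).conj g = g.symm a • D.conj g := by
  ext x
  simp [smul_eq_mul]

end Derivation

namespace AdjoinRoot

variable {R : Type*} [CommRing R] {f : R[X]}

lemma derivation_ext {M : Type*} [AddCommMonoid M] [Module (AdjoinRoot f) M] [Module R M]
    [IsScalarTower R (AdjoinRoot f) M] {D₁ D₂ : Derivation R (AdjoinRoot f) M}
    (h : D₁ (root f) = D₂ (root f)) : D₁ = D₂ :=
  Derivation.ext_of_adjoin_eq_top {root f} adjoinRoot_eq_top (Set.eqOn_singleton.2 h)

lemma derivation_eq_smul {E : Derivation R (AdjoinRoot f) (AdjoinRoot f)}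
    (hE : E (root f) = 1) (D : Derivation R (AdjoinRoot f) (AdjoinRoot f)) :
    D = D (root f) • E :=
  derivation_ext (by simp [hE])

lemma derivation_mk (D : Derivation R (AdjoinRoot f) (AdjoinRoot f)) (φ : R[X]) :
    D (mk f φ) = mk f (derivative φ) * D (root f) := by
  rw [← aeval_eq, Derivation.comp_aeval_eq, aeval_eq, smul_eq_mul]

lemma mk_derivative_mul_conj_root {g : AdjoinRoot f ≃ₐ[R] AdjoinRoot f} {φ : R[X]}
    (hφ : mk f φ = g.symm (root f)) {E : Derivation R (AdjoinRoot f) (AdjoinRoot f)}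
    (hE : E (root f) = 1) : mk f (derivative φ) * E.conj g (root f) = 1 := by
  rw [← derivation_mk, hφ, Derivation.conj_apply, AlgEquiv.apply_symm_apply, hE, map_one]

end AdjoinRoot

open AdjoinRoot in
theorem stmt10_general {k : Type*} [Field k] (p : ℕ) (ω : k)
    (g : Lp k p ω ≃ₐ[k] Lp k p ω) (φ : Polynomial k)
    (hφ : AdjoinRoot.mk (Polynomial.X ^ p - Polynomial.C ω) φ
      = g.symm (AdjoinRoot.root (Polynomial.X ^ p - Polynomial.C ω)))
    (E : Derivation k (Lp k p ω) (Lp k p ω))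
    (hE : E (AdjoinRoot.root (Polynomial.X ^ p - Polynomial.C ω)) = 1) :
    IsUnit (AdjoinRoot.mk (Polynomial.X ^ p - Polynomial.C ω)
      (Polynomial.derivative φ)) ∧
    ∀ (D : Derivation k (Lp k p ω) (Lp k p ω)) (u : Lp k p ω),
      AdjoinRoot.mk (Polynomial.X ^ p - Polynomial.C ω) (Polynomial.derivative φ) * u
        = 1 →
      (g.symm.toLinearMap ∘ₗ D.toLinearMap ∘ₗ g.toLinearMap : Lp k p ω →ₗ[k] Lp k p ω)
        = (g.symm (D (AdjoinRoot.root (Polynomial.X ^ p - Polynomial.C ω))) * u)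
            • E.toLinearMap := by
  set f : k[X] := X ^ p - C ω
  have hchain := mk_derivative_mul_conj_root hφ hE
  refine ⟨.of_mul_eq_one _ hchain, fun D u hu => ?_⟩
  have hu' : E.conj g (root f) = u := left_inv_eq_right_inv (by rw [mul_comm, hchain]) hu
  have hconj : D.conj g = (g.symm (D (root f)) * u) • E :=
    calc D.conj g = (D (root f) • E).conj g := by rw [← derivation_eq_smul hE]
      _ = g.symm (D (root f)) • (E.conj g (root f) • E) := by
        rw [Derivation.conj_smul, ← derivation_eq_smul hE]
      _ = (g.symm (D (root f)) * u) • E := by rw [hu', smul_smul]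
  exact congrArg Derivation.toLinearMap hconj

set_option maxHeartbeats 1000000 in
/-- Let `g` be a `k`-algebra automorphism of `L = k[t]/(t^p - ω)` whose inverse is
the substitution `t ↦ φ(t)`, and let `∂ = E` be the derivation with `∂(t) = 1`.
Then `φ'(t)` is a unit in `L`, and for any derivation `D = f∂` (so `f = D t`),
the adjoint action is `Ad_g(D) = g⁻¹ ∘ D ∘ g = (f(φ(t))/φ'(t)) ∂`, where
`f(φ(t)) = g⁻¹(f)` and `u` denotes the inverse of `φ'(t)`. -/
theorem stmt10 {k : Type*} [Field k] (p : ℕ) [Fact p.Prime] [CharP k p] (ω : k)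
    (g : Lp k p ω ≃ₐ[k] Lp k p ω) (φ : Polynomial k)
    (hφ : AdjoinRoot.mk (Polynomial.X ^ p - Polynomial.C ω) φ
      = g.symm (AdjoinRoot.root (Polynomial.X ^ p - Polynomial.C ω)))
    (E : Derivation k (Lp k p ω) (Lp k p ω))
    (hE : E (AdjoinRoot.root (Polynomial.X ^ p - Polynomial.C ω)) = 1) :
    IsUnit (AdjoinRoot.mk (Polynomial.X ^ p - Polynomial.C ω)
      (Polynomial.derivative φ)) ∧
    ∀ (D : Derivation k (Lp k p ω) (Lp k p ω)) (u : Lp k p ω),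
      AdjoinRoot.mk (Polynomial.X ^ p - Polynomial.C ω) (Polynomial.derivative φ) * u
        = 1 →
      (g.symm.toLinearMap ∘ₗ D.toLinearMap ∘ₗ g.toLinearMap : Lp k p ω →ₗ[k] Lp k p ω)
        = (g.symm (D (AdjoinRoot.root (Polynomial.X ^ p - Polynomial.C ω))) * u)
            • E.toLinearMap :=
  stmt10_general p ω g φ hφ E hE
end

section
/- Let A = k[[x,y,z]] be a formal power series ring over a field k, and let f ∈ A be irreducible with f ≡ x_0 y_0 + λ z_0^2 mod m^3 for some regular system of parameters x_0, y_0, z_0 and some λ ∈ k. Then there exists a regular system of parameters x, y, z with (f) = (xy + z^n) for some n ≥ 2. -/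
/-!
Suppose `f ≡ a b + P(z) mod 𝔪ⁿ` with `n ≥ 3`, `a ≡ x` and `b ≡ y` modulo `𝔪²`, and `X² ∣ P`.
Since `𝔪ⁿ = (x, y) 𝔪ⁿ⁻¹ + k zⁿ + 𝔪ⁿ⁺¹`, the error is `α x + β y + c zⁿ` modulo `𝔪ⁿ⁺¹` with
`α, β ∈ 𝔪ⁿ⁻¹`, and replacing `(a, b, P)` by `(a + β, b + α, P + c Xⁿ)` pushes it into `𝔪ⁿ⁺¹`,
because `α (a - x)`, `β (b - y)` and `α β` lie there. The corrections converge, `k⟦x, y, z⟧` being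
`𝔪`-adically complete, so `f = a b + P(z)`. Irreducibility of `f` forbids `P = 0`, hence
`P(z) = zⁿ u` with `u` a unit and `n ≥ 2`, and `(f) = (u⁻¹ a · b + zⁿ)`; by Nakayama
`u⁻¹ a, b, z` is again a regular system of parameters.
-/

/-- A regular system of parameters of `A = k[[x,y,z]]`: a triple generating the
maximal ideal. -/
def IsRegSys {k : Type*} [Field k] (v : Fin 3 → MvPowerSeries (Fin 3) k) : Prop :=
  Ideal.span (Set.range v) = IsLocalRing.maximalIdeal (MvPowerSeries (Fin 3) k)

open IsLocalRing

theorem exists_seq_of_forall_exists_succ {α : Type*} {p : ℕ → α → Prop}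
    {q : ℕ → α → α → Prop} {a : α} (h₀ : p 0 a) (h : ∀ n x, p n x → ∃ y, p (n + 1) y ∧ q n x y) :
    ∃ s : ℕ → α, ∀ n, p n (s n) ∧ q n (s n) (s (n + 1)) := by
  have : Nonempty α := ⟨a⟩
  choose! F hF using h
  let s : ℕ → α := fun n => Nat.rec a (fun n x => F n x) n
  have hs (n : ℕ) : p n (s n) := by
    induction n with
    | zero => exact h₀
    | succ n ih => exact (hF n _ ih).1
  exact ⟨s, fun n => ⟨hs n, (hF n _ (hs n)).2⟩⟩

theorem Ideal.mul_mem_pow_add {R : Type*} [CommRing R] {I : Ideal R} {a b : R} {m n : ℕ}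
    (ha : a ∈ I ^ m) (hb : b ∈ I ^ n) : a * b ∈ I ^ (m + n) :=
  pow_add I m n ▸ Ideal.mul_mem_mul ha hb

theorem Ideal.mem_of_sub_mem_pow {R : Type*} [CommRing R] {I : Ideal R} {a x : R} {n : ℕ}
    (hn : n ≠ 0) (ha : a - x ∈ I ^ n) (hx : x ∈ I) : a ∈ I := by
  simpa using add_mem (Ideal.pow_le_self hn ha) hx

theorem Ideal.sup_span_singleton_pow_succ_le {R : Type*} [CommRing R] (J : Ideal R) (z : R)
    (n : ℕ) : (J ⊔ span {z}) ^ (n + 1) ≤ J * (J ⊔ span {z}) ^ n ⊔ span {z ^ (n + 1)} := by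
  induction n with
  | zero => simp
  | succ n ih =>
    set I := J ⊔ span {z}
    have hz : span {z ^ (n + 1)} ≤ I ^ (n + 1) := by
      rw [← Ideal.span_singleton_pow]; exact Ideal.pow_right_mono le_sup_right _
    calc I ^ (n + 2) = I * I ^ (n + 1) := pow_succ' _ _
      _ ≤ I * (J * I ^ n ⊔ span {z ^ (n + 1)}) := Ideal.mul_mono_right ih
      _ = J * I ^ (n + 1) ⊔ (J * span {z ^ (n + 1)} ⊔ span {z ^ (n + 2)}) := by
        rw [Ideal.mul_sup, mul_left_comm, ← pow_succ', Ideal.sup_mul,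
          Ideal.span_singleton_mul_span_singleton, ← pow_succ']
      _ ≤ J * I ^ (n + 1) ⊔ span {z ^ (n + 2)} :=
        sup_le le_sup_left (sup_le_sup_right (Ideal.mul_mono_right hz) _)

theorem IsPrecomplete.exists_sub_mem_pow {R : Type*} [CommRing R] {I : Ideal R}
    [IsPrecomplete I R] (s : ℕ → R) (hs : ∀ n, s (n + 1) - s n ∈ I ^ n) :
    ∃ L, ∀ n, s n - L ∈ I ^ n := by
  have hcauchy (m j : ℕ) : s m - s (m + j) ∈ I ^ m := by
    induction j with
    | zero => simp
    | succ j ih =>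
      rw [← add_assoc, ← sub_sub_sub_cancel_right _ _ (s (m + j))]
      exact sub_mem ih (Ideal.pow_le_pow_right (by omega) (hs (m + j)))
  obtain ⟨L, hL⟩ := IsPrecomplete.prec inferInstance (I := I) (f := s) fun {m n} hmn => by
    obtain ⟨j, rfl⟩ := Nat.exists_eq_add_of_le hmn
    simpa [SModEq.sub_mem] using hcauchy m j
  exact ⟨L, fun n => by simpa [SModEq.sub_mem] using hL n⟩

theorem IsHausdorff.eq_of_forall_sub_mem_pow {R : Type*} [CommRing R] {I : Ideal R}
    [IsHausdorff I R] {x y : R} (h : ∀ n, x - y ∈ I ^ n) : x = y :=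
  (IsHausdorff.eq_iff_smodEq (I := I)).mpr fun n => by simpa [SModEq.sub_mem] using h n

theorem IsLocalRing.eq_maximalIdeal_of_le_sup_sq {R : Type*} [CommRing R] [IsLocalRing R]
    [IsNoetherianRing R] {I : Ideal R} (hI : I ≤ maximalIdeal R)
    (h : maximalIdeal R ≤ I ⊔ maximalIdeal R ^ 2) : I = maximalIdeal R :=
  le_antisymm hI <| Submodule.le_of_le_smul_of_le_jacobson_bot (IsNoetherian.noetherian _)
    (maximalIdeal_le_jacobson ⊥) (by rwa [smul_eq_mul, ← pow_two])

theorem IsLocalRing.span_eq_maximalIdeal_of_sub_mem_sq {R : Type*} [CommRing R] [IsLocalRing R]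
    [IsNoetherianRing R] {x y z a b u : R} (hm : Ideal.span {x, y, z} = maximalIdeal R)
    (ha : a - x ∈ maximalIdeal R ^ 2) (hb : b - y ∈ maximalIdeal R ^ 2) (hu : IsUnit u) :
    Ideal.span {u * a, b, z} = maximalIdeal R := by
  obtain ⟨u, rfl⟩ := hu
  have hxyz : x ∈ maximalIdeal R ∧ y ∈ maximalIdeal R ∧ z ∈ maximalIdeal R := by
    rw [← hm]
    exact ⟨Ideal.subset_span (by simp), Ideal.subset_span (by simp), Ideal.subset_span (by simp)⟩
  have hI : ↑u * a ∈ Ideal.span {↑u * a, b, z} ∧ b ∈ Ideal.span {↑u * a, b, z} ∧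
      z ∈ Ideal.span {↑u * a, b, z} :=
    ⟨Ideal.subset_span (by simp), Ideal.subset_span (by simp), Ideal.subset_span (by simp)⟩
  refine eq_maximalIdeal_of_le_sup_sq ?_ (hm.symm.trans_le ?_) <;>
    simp only [Ideal.span_le, Set.insert_subset_iff, Set.singleton_subset_iff, SetLike.mem_coe]
  · exact ⟨Ideal.mul_mem_left _ _ (Ideal.mem_of_sub_mem_pow two_ne_zero ha hxyz.1),
      Ideal.mem_of_sub_mem_pow two_ne_zero hb hxyz.2.1, hxyz.2.2⟩
  · refine ⟨?_, ?_, Ideal.mem_sup_left hI.2.2⟩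
    · rw [show x = ↑u⁻¹ * (↑u * a) - (a - x) by rw [u.inv_mul_cancel_left]; ring]
      exact Submodule.sub_mem_sup (Ideal.mul_mem_left _ _ hI.1) ha
    · rw [show y = b - (b - y) by ring]
      exact Submodule.sub_mem_sup hI.2.1 hb

theorem PowerSeries.exists_eq_X_pow_mul_of_X_pow_dvd {k : Type*} [Field k] {P : PowerSeries k}
    (hP : P ≠ 0) {d : ℕ} (hd : X ^ d ∣ P) : ∃ n Q, d ≤ n ∧ IsUnit Q ∧ P = X ^ n * Q := by
  refine ⟨P.order.toNat, P.divXPowOrder, ?_, ?_, X_pow_order_mul_divXPowOrder.symm⟩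
  · have := nat_le_order P d (X_pow_dvd_iff.mp hd)
    rwa [← ENat.natCast_toNat (order_eq_top.not.mpr hP), Nat.cast_le] at this
  · rw [isUnit_iff_constantCoeff, isUnit_iff_ne_zero]
    exact constantCoeff_divXPowOrder_eq_zero_iff.not.mpr hP

namespace MvPowerSeries

theorem ker_constantCoeff_eq_span_range_X {σ R : Type*} [CommRing R] [Finite σ] :
    RingHom.ker (constantCoeff (σ := σ) (R := R)) = Ideal.span (Set.range X) := by
  classical
  refine le_antisymm (fun p hp => ?_) (Ideal.span_le.mpr ?_)
  · cases nonempty_fintype σ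
    let _ : LinearOrder σ := LinearOrder.lift' _ (Fintype.equivFin σ).injective
    -- split `p` according to the least variable occurring in each monomial
    let part (i : σ) : MvPowerSeries σ R :=
      fun d => if d.support.min = (i : WithTop σ) then coeff d p else 0
    have hpart : p = ∑ i, part i := by
      ext d
      rw [map_sum]
      change coeff d p = ∑ i : σ, if d.support.min = (i : WithTop σ) then coeff d p else 0
      cases hd : d.support.min with
      | top =>
        rw [Finset.min_eq_top, Finsupp.support_eq_empty] at hd
        subst hd
        simpa using hp
      | coe j => simp [WithTop.coe_inj]
    have hdvd (i : σ) : X i ∣ part i := by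
      rw [X_dvd_iff]
      intro d hd
      change (if d.support.min = (i : WithTop σ) then coeff d p else 0) = 0
      rw [if_neg fun h => Finsupp.mem_support_iff.mp (Finset.mem_of_min h) hd]
    rw [hpart]
    refine Ideal.sum_mem _ fun i _ => ?_
    obtain ⟨q, hq⟩ := hdvd i
    rw [hq]
    exact Ideal.mul_mem_right _ _ (Ideal.subset_span ⟨i, rfl⟩)
  · rintro _ ⟨i, rfl⟩
    exact constantCoeff_X i

variable {σ k : Type*} [Field k] {x y z : MvPowerSeries σ k}

local notation "𝔪" => maximalIdeal (MvPowerSeries σ k)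

theorem maximalIdeal_eq_ker_constantCoeff :
    maximalIdeal (MvPowerSeries σ k) = RingHom.ker constantCoeff :=
  have := RingHom.ker_isMaximal_of_surjective (constantCoeff (σ := σ) (R := k))
    fun c => ⟨C c, constantCoeff_C c⟩
  (eq_maximalIdeal this).symm

instance isAdicComplete_maximalIdeal [Finite σ] : IsAdicComplete 𝔪 (MvPowerSeries σ k) := by
  rw [maximalIdeal_eq_ker_constantCoeff, ker_constantCoeff_eq_span_range_X]
  infer_instance

theorem sub_C_constantCoeff_mem_maximalIdeal (r : MvPowerSeries σ k) :
    r - C (constantCoeff r) ∈ 𝔪 := by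
  simp [mem_maximalIdeal, mem_nonunits_iff, isUnit_iff_constantCoeff]

theorem hasSubst_of_mem_maximalIdeal (hz : z ∈ 𝔪) : PowerSeries.HasSubst z :=
  .of_constantCoeff_zero <| by rwa [maximalIdeal_eq_ker_constantCoeff, RingHom.mem_ker] at hz

theorem subst_mem_maximalIdeal_pow (hz : z ∈ 𝔪) {Q : PowerSeries k} {n : ℕ}
    (hQ : Q ∈ Ideal.span {PowerSeries.X} ^ n) : Q.subst z ∈ 𝔪 ^ n := by
  rw [Ideal.span_singleton_pow, Ideal.mem_span_singleton] at hQ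
  obtain ⟨Q, rfl⟩ := hQ
  rw [← PowerSeries.coe_substAlgHom (hasSubst_of_mem_maximalIdeal hz), map_mul, map_pow,
    PowerSeries.substAlgHom_X]
  exact Ideal.mul_mem_right _ _ (Ideal.pow_mem_pow hz n)

theorem subst_C_mul_X_pow (hz : PowerSeries.HasSubst z) (c : k) (n : ℕ) :
    (PowerSeries.C c * PowerSeries.X ^ n).subst z = C c * z ^ n := by
  rw [← PowerSeries.coe_substAlgHom hz, map_mul, map_pow, PowerSeries.substAlgHom_X,
    PowerSeries.coe_substAlgHom, PowerSeries.subst_C]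

theorem exists_eq_mul_add_mul_add_C_mul_pow (hm : Ideal.span {x, y, z} = 𝔪) {n : ℕ}
    {r : MvPowerSeries σ k} (hr : r ∈ 𝔪 ^ (n + 1)) :
    ∃ α β γ c, α ∈ 𝔪 ^ n ∧ β ∈ 𝔪 ^ n ∧ γ ∈ 𝔪 ^ (n + 2) ∧
      r = α * x + β * y + C c * z ^ (n + 1) + γ := by
  have hsup : 𝔪 = (Ideal.span {x} ⊔ Ideal.span {y}) ⊔ Ideal.span {z} := by
    rw [← hm, Ideal.span_insert, Ideal.span_insert, sup_assoc]
  have hz : z ∈ 𝔪 := hsup ▸ Ideal.mem_sup_right (Ideal.mem_span_singleton_self z)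
  have hr' := Ideal.sup_span_singleton_pow_succ_le _ z n (hsup ▸ hr)
  rw [← hsup, Ideal.sup_mul] at hr'
  obtain ⟨_, hs, _, ht, rfl⟩ := Submodule.mem_sup.mp hr'
  obtain ⟨_, hxα, _, hyβ, rfl⟩ := Submodule.mem_sup.mp hs
  obtain ⟨α, hα, rfl⟩ := Ideal.mem_span_singleton_mul.mp hxα
  obtain ⟨β, hβ, rfl⟩ := Ideal.mem_span_singleton_mul.mp hyβ
  obtain ⟨t, rfl⟩ := Ideal.mem_span_singleton'.mp ht
  refine ⟨α, β, (t - C (constantCoeff t)) * z ^ (n + 1), constantCoeff t, hα, hβ, ?_, by ring⟩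
  rw [pow_succ' _ (n + 1)]
  exact Ideal.mul_mem_mul (sub_C_constantCoeff_mem_maximalIdeal t) (Ideal.pow_mem_pow hz _)

variable (x y z) in
def IsApproxNormalForm (f : MvPowerSeries σ k) (n : ℕ) (a b : MvPowerSeries σ k)
    (P : PowerSeries k) : Prop :=
  a - x ∈ 𝔪 ^ 2 ∧ b - y ∈ 𝔪 ^ 2 ∧ PowerSeries.X ^ 2 ∣ P ∧ f - (a * b + P.subst z) ∈ 𝔪 ^ n

theorem IsApproxNormalForm.exists_succ (hm : Ideal.span {x, y, z} = 𝔪)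
    {f a b : MvPowerSeries σ k} {P : PowerSeries k} {n : ℕ}
    (h : IsApproxNormalForm x y z f (n + 3) a b P) :
    ∃ a' b' P', IsApproxNormalForm x y z f (n + 4) a' b' P' ∧ a' - a ∈ 𝔪 ^ (n + 2) ∧
      b' - b ∈ 𝔪 ^ (n + 2) ∧ P' - P ∈ Ideal.span {PowerSeries.X} ^ (n + 3) := by
  obtain ⟨ha, hb, hP, hf⟩ := h
  obtain ⟨α, β, γ, c, hα, hβ, hγ, hr⟩ := exists_eq_mul_add_mul_add_C_mul_pow hm hf
  have hzS := hasSubst_of_mem_maximalIdeal (hm ▸ Ideal.subset_span (by simp) : z ∈ 𝔪)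
  have hcX : PowerSeries.C c * PowerSeries.X ^ (n + 3) ∈ Ideal.span {PowerSeries.X} ^ (n + 3) :=
    Ideal.mul_mem_left _ _ (Ideal.pow_mem_pow (Ideal.mem_span_singleton_self _) _)
  refine ⟨a + β, b + α, P + PowerSeries.C c * PowerSeries.X ^ (n + 3), ⟨?_, ?_, ?_, ?_⟩,
    by simpa using hβ, by simpa using hα, by simpa using hcX⟩
  · rw [add_sub_right_comm]
    exact add_mem ha (Ideal.pow_le_pow_right (by omega) hβ)
  · rw [add_sub_right_comm]
    exact add_mem hb (Ideal.pow_le_pow_right (by omega) hα)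
  · exact dvd_add hP (Dvd.dvd.mul_left (pow_dvd_pow _ (by omega)) _)
  have key : f - ((a + β) * (b + α) + (P + PowerSeries.C c * PowerSeries.X ^ (n + 3)).subst z) =
      γ - α * (a - x) - β * (b - y) - α * β := by
    rw [PowerSeries.subst_add hzS, subst_C_mul_X_pow hzS]
    linear_combination hr
  have hαa : α * (a - x) ∈ 𝔪 ^ (n + 2 + 2) := Ideal.mul_mem_pow_add hα ha
  have hβb : β * (b - y) ∈ 𝔪 ^ (n + 2 + 2) := Ideal.mul_mem_pow_add hβ hb
  have hαβ : α * β ∈ 𝔪 ^ (n + 4) :=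
    Ideal.pow_le_pow_right (by omega) (Ideal.mul_mem_pow_add hα hβ)
  rw [key]
  exact sub_mem (sub_mem (sub_mem hγ hαa) hβb) hαβ

theorem exists_seq_isApproxNormalForm (hm : Ideal.span {x, y, z} = 𝔪)
    {f : MvPowerSeries σ k} {lam : k} (hf : f - (x * y + C lam * z ^ 2) ∈ 𝔪 ^ 3) :
    ∃ (a b : ℕ → MvPowerSeries σ k) (P : ℕ → PowerSeries k), ∀ n,
      IsApproxNormalForm x y z f (n + 3) (a n) (b n) (P n) ∧ a (n + 1) - a n ∈ 𝔪 ^ n ∧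
        b (n + 1) - b n ∈ 𝔪 ^ n ∧ P (n + 1) - P n ∈ Ideal.span {PowerSeries.X} ^ n := by
  have hzS := hasSubst_of_mem_maximalIdeal (hm ▸ Ideal.subset_span (by simp) : z ∈ 𝔪)
  have h₀ : IsApproxNormalForm x y z f 3 x y (PowerSeries.C lam * PowerSeries.X ^ 2) :=
    ⟨by simp, by simp, dvd_mul_left _ _, by rwa [subst_C_mul_X_pow hzS]⟩
  obtain ⟨s, hs⟩ := exists_seq_of_forall_exists_succ
    (p := fun n s => IsApproxNormalForm x y z f (n + 3) s.1 s.2.1 s.2.2)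
    (q := fun n s t => t.1 - s.1 ∈ 𝔪 ^ n ∧ t.2.1 - s.2.1 ∈ 𝔪 ^ n ∧
      t.2.2 - s.2.2 ∈ Ideal.span {PowerSeries.X} ^ n)
    (a := (x, y, PowerSeries.C lam * PowerSeries.X ^ 2)) h₀ fun n s hs => by
      obtain ⟨a, b, P, h, ha, hb, hP⟩ := hs.exists_succ hm
      exact ⟨(a, b, P), h, Ideal.pow_le_pow_right (by omega) ha,
        Ideal.pow_le_pow_right (by omega) hb, Ideal.pow_le_pow_right (by omega) hP⟩
  exact ⟨fun n => (s n).1, fun n => (s n).2.1, fun n => (s n).2.2, hs⟩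

theorem exists_eq_mul_add_subst [Finite σ] (hm : Ideal.span {x, y, z} = 𝔪)
    {f : MvPowerSeries σ k} {lam : k} (hf : f - (x * y + C lam * z ^ 2) ∈ 𝔪 ^ 3) :
    ∃ (a b : MvPowerSeries σ k) (P : PowerSeries k), a - x ∈ 𝔪 ^ 2 ∧ b - y ∈ 𝔪 ^ 2 ∧
      PowerSeries.X ^ 2 ∣ P ∧ f = a * b + P.subst z := by
  have hz : z ∈ 𝔪 := hm ▸ Ideal.subset_span (by simp)
  obtain ⟨a, b, P, hs⟩ := exists_seq_isApproxNormalForm hm hf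
  obtain ⟨a', ha⟩ := IsPrecomplete.exists_sub_mem_pow a fun n => (hs n).2.1
  obtain ⟨b', hb⟩ := IsPrecomplete.exists_sub_mem_pow b fun n => (hs n).2.2.1
  obtain ⟨P', hP⟩ := IsPrecomplete.exists_sub_mem_pow P fun n => (hs n).2.2.2
  refine ⟨a', b', P', ?_, ?_, ?_, ?_⟩
  · rw [← sub_sub_sub_cancel_left _ _ (a 2)]
    exact sub_mem (hs 2).1.1 (ha 2)
  · rw [← sub_sub_sub_cancel_left _ _ (b 2)]
    exact sub_mem (hs 2).1.2.1 (hb 2)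
  · have := hP 2
    rw [Ideal.span_singleton_pow, Ideal.mem_span_singleton] at this
    simpa using dvd_sub (hs 2).1.2.2.1 this
  refine IsHausdorff.eq_of_forall_sub_mem_pow (I := 𝔪) fun n => ?_
  have : f - (a' * b' + P'.subst z) = (f - (a n * b n + (P n).subst z)) +
      a n * (b n - b') + (a n - a') * b' + (P n - P').subst z := by
    rw [PowerSeries.subst_sub (hasSubst_of_mem_maximalIdeal hz)]
    ring
  rw [this]
  refine add_mem (add_mem (add_mem ?_ ?_) ?_) (subst_mem_maximalIdeal_pow hz (hP n))
  · exact Ideal.pow_le_pow_right (by omega) (hs n).1.2.2.2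
  · exact Ideal.mul_mem_left _ _ (hb n)
  · exact Ideal.mul_mem_right _ _ (ha n)

theorem exists_subst_eq_pow_mul_unit (hz : z ∈ 𝔪) {P : PowerSeries k} (hP₀ : P ≠ 0) {d : ℕ}
    (hP : PowerSeries.X ^ d ∣ P) :
    ∃ n, d ≤ n ∧ ∃ u : (MvPowerSeries σ k)ˣ, P.subst z = z ^ n * u := by
  obtain ⟨n, Q, hn, hQ, rfl⟩ := PowerSeries.exists_eq_X_pow_mul_of_X_pow_dvd hP₀ hP
  have hzS := hasSubst_of_mem_maximalIdeal hz
  obtain ⟨u, hu⟩ := hQ.map (PowerSeries.substAlgHom hzS)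
  refine ⟨n, hn, u, ?_⟩
  rw [← PowerSeries.coe_substAlgHom hzS, map_mul, map_pow, PowerSeries.substAlgHom_X, hu]

end MvPowerSeries

theorem Set.range_fin_three {α : Type*} (v : Fin 3 → α) : Set.range v = {v 0, v 1, v 2} := by
  ext; simp [Fin.exists_fin_succ, eq_comm]

/-- Let `A = k[[x,y,z]]` and `f ∈ A` irreducible with
`f ≡ x₀y₀ + λz₀² mod m³` for some regular system of parameters `x₀, y₀, z₀` and
`λ ∈ k`.  Then there is a regular system of parameters `x, y, z` and `n ≥ 2` with
`(f) = (xy + zⁿ)`. -/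
theorem stmt13 {k : Type*} [Field k] (f : MvPowerSeries (Fin 3) k)
    (hf : Irreducible f) (v : Fin 3 → MvPowerSeries (Fin 3) k) (hv : IsRegSys v)
    (lam : k)
    (hcong : f - (v 0 * v 1 + MvPowerSeries.C (σ := Fin 3) (R := k) lam * v 2 ^ 2)
      ∈ (IsLocalRing.maximalIdeal (MvPowerSeries (Fin 3) k)) ^ 3) :
    ∃ (w : Fin 3 → MvPowerSeries (Fin 3) k) (n : ℕ),
      IsRegSys w ∧ 2 ≤ n ∧
      Ideal.span {f} = Ideal.span {w 0 * w 1 + w 2 ^ n} := by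
  have hm : Ideal.span {v 0, v 1, v 2} = maximalIdeal (MvPowerSeries (Fin 3) k) :=
    Set.range_fin_three v ▸ hv
  have hvm (i : Fin 3) : v i ∈ maximalIdeal _ := hv ▸ Ideal.subset_span ⟨i, rfl⟩
  obtain ⟨a, b, P, ha, hb, hP, rfl⟩ := MvPowerSeries.exists_eq_mul_add_subst hm hcong
  have hP₀ : P ≠ 0 := by
    rintro rfl
    rw [← PowerSeries.coe_substAlgHom (MvPowerSeries.hasSubst_of_mem_maximalIdeal (hvm 2)),
      map_zero, add_zero] at hf
    exact (hf.isUnit_or_isUnit rfl).elim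
      ((mem_maximalIdeal a).mp (Ideal.mem_of_sub_mem_pow two_ne_zero ha (hvm 0)))
      ((mem_maximalIdeal b).mp (Ideal.mem_of_sub_mem_pow two_ne_zero hb (hvm 1)))
  obtain ⟨n, hn, u, hPu⟩ := MvPowerSeries.exists_subst_eq_pow_mul_unit (hvm 2) hP₀ hP
  refine ⟨![↑u⁻¹ * a, b, v 2], n, ?_, hn, ?_⟩
  · rw [IsRegSys, Set.range_fin_three]
    exact span_eq_maximalIdeal_of_sub_mem_sq hm ha hb u⁻¹.isUnit
  · have : a * b + v 2 ^ n * u = u * (↑u⁻¹ * a * b + v 2 ^ n) := by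
      linear_combination (-(a * b)) * u.mul_inv
    rw [hPu, this, Ideal.span_singleton_mul_left_unit u.isUnit]
    rfl
end

section
/- Let k be a field of characteristic p and ω, ω' ∈ k. The k-algebras k[t]/(t^p − ω) and k[t']/(t'^p − ω') are isomorphic if and only if k^p(ω) = k^p(ω') as subfields of k. -/
/-!
The elements of `k` that become `p`-th powers in `A_ω = k[t]/(t^p - ω)` form exactly `k^p(ω)`:
by additivity of Frobenius, `(g(t))^p = g^{(p)}(ω)`, where `g^{(p)}` raises the coefficients
of `g` to the `p`-th power. This subfield is an invariant of the `k`-algebra, which gives one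
direction. Conversely, if `k^p(ω) = k^p(ω')` then `ω' = x^p` for some `x ∈ A_ω`, and
`t' ↦ x` defines a `k`-algebra map `A_ω' → A_ω`. If `ω' ∉ k^p`, then `A_ω'` is a field and
both algebras have dimension `p`, so this map is an isomorphism. Otherwise `ω, ω' ∈ k^p`, and
a translation of `t` identifies both algebras with `k[t]/(t^p)`.
-/

open Polynomial

section PthPowerSubfield

variable (k A : Type*) [Field k] [CommRing A] [Algebra k A] (p : ℕ) [ExpChar A p]

def pthPowerSubfield : Subfield k where
  toSubring := (frobenius A p).range.comap (algebraMap k A)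
  inv_mem' a ha := by
    obtain ⟨q, hq⟩ := Nat.exists_eq_add_one.2 (expChar_pos A p)
    have hinv : a⁻¹ = a ^ q * a⁻¹ ^ p := by
      rcases eq_or_ne a 0 with rfl | ha0
      · simp [hq]
      · rw [hq, pow_succ, ← mul_assoc, ← mul_pow, mul_inv_cancel₀ ha0, one_pow, one_mul]
    rw [hinv]
    exact Subring.mul_mem _ (Subring.pow_mem _ ha _)
      ⟨algebraMap k A a⁻¹, by rw [map_pow, frobenius_def]⟩

variable {k A p}

theorem mem_pthPowerSubfield {y : k} :
    y ∈ pthPowerSubfield k A p ↔ ∃ x : A, x ^ p = algebraMap k A y :=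
  Iff.rfl

theorem pthPowerSubfield_le_of_algHom {B : Type*} [CommRing B] [Algebra k B] [ExpChar B p]
    (f : A →ₐ[k] B) : pthPowerSubfield k A p ≤ pthPowerSubfield k B p := by
  intro y hy
  obtain ⟨x, hx⟩ := mem_pthPowerSubfield.1 hy
  exact mem_pthPowerSubfield.2 ⟨f x, by rw [← map_pow, hx, AlgHom.commutes]⟩

theorem pthPowerSubfield_congr {B : Type*} [CommRing B] [Algebra k B] [ExpChar B p]
    (e : A ≃ₐ[k] B) : pthPowerSubfield k A p = pthPowerSubfield k B p :=
  le_antisymm (pthPowerSubfield_le_of_algHom e.toAlgHom)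
    (pthPowerSubfield_le_of_algHom e.symm.toAlgHom)

end PthPowerSubfield

namespace AdjoinRoot

variable {k : Type*} [Field k]

theorem nontrivial_X_pow_sub_C {n : ℕ} (hn : n ≠ 0) (a : k) :
    Nontrivial (AdjoinRoot (X ^ n - C a)) :=
  AdjoinRoot.nontrivial _ (by rw [degree_X_pow_sub_C (Nat.pos_of_ne_zero hn)]; exact_mod_cast hn)

theorem finrank_X_pow_sub_C (n : ℕ) (a : k) : Module.finrank k (AdjoinRoot (X ^ n - C a)) = n :=
  finrank_quotient_span_eq_natDegree.trans natDegree_X_pow_sub_C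

theorem finite_X_pow_sub_C {n : ℕ} (hn : n ≠ 0) (a : k) :
    Module.Finite k (AdjoinRoot (X ^ n - C a)) :=
  Module.finite_of_finrank_pos (by rw [finrank_X_pow_sub_C]; omega)

section LiftOfPowEq

variable {B : Type*} [CommRing B] [Algebra k B] {n : ℕ} {b : k}

noncomputable def liftOfPowEq (x : B) (hx : x ^ n = algebraMap k B b) :
    AdjoinRoot (X ^ n - C b) →ₐ[k] B :=
  liftAlgHom _ (Algebra.ofId k B) x (by simp [hx])

@[simp]
theorem liftOfPowEq_root (x : B) (hx : x ^ n = algebraMap k B b) :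
    liftOfPowEq x hx (root _) = x :=
  liftAlgHom_root ..

end LiftOfPowEq

theorem nonempty_algEquiv_of_pow_eq {n : ℕ} {a b : k} (hb : Irreducible (X ^ n - C b))
    (x : AdjoinRoot (X ^ n - C a)) (hx : x ^ n = algebraMap k _ b) :
    Nonempty (AdjoinRoot (X ^ n - C b) ≃ₐ[k] AdjoinRoot (X ^ n - C a)) := by
  have hn := ne_zero_of_irreducible_X_pow_sub_C hb
  have := Fact.mk hb
  have := nontrivial_X_pow_sub_C hn a
  have := finite_X_pow_sub_C hn a
  have := finite_X_pow_sub_C hn b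
  let f := liftOfPowEq x hx
  have hf : Function.Injective f := f.toRingHom.injective
  exact ⟨AlgEquiv.ofBijective f ⟨hf, (LinearMap.injective_iff_surjective_of_finrank_eq_finrank
    (by rw [finrank_X_pow_sub_C, finrank_X_pow_sub_C]) (f := f.toLinearMap)).1 hf⟩⟩

variable {p : ℕ} [ExpChar k p]

instance expChar_X_pow_sub_C (ω : k) : ExpChar (AdjoinRoot (X ^ p - C ω)) p :=
  haveI := nontrivial_X_pow_sub_C (expChar_pos k p).ne' ω
  expChar_of_injective_algebraMap (algebraMap k _).injective p

theorem frobenius_mk_X_pow_sub_C (ω : k) (g : k[X]) :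
    frobenius _ p (mk (X ^ p - C ω) g) = algebraMap k _ (g.eval₂ (frobenius k p) ω) := by
  rw [← aeval_eq, aeval_def, hom_eval₂, ← RingHom.frobenius_comm, frobenius_def,
    root_X_pow_sub_C_pow, ← algebraMap_eq, ← hom_eval₂]

theorem pthPowerSubfield_X_pow_sub_C (ω : k) :
    pthPowerSubfield k (AdjoinRoot (X ^ p - C ω)) p =
      Subfield.closure (insert ω (Set.range fun x : k => x ^ p)) := by
  apply le_antisymm
  · rintro y ⟨x, hx⟩
    obtain ⟨g, rfl⟩ := mk_surjective x
    rw [frobenius_mk_X_pow_sub_C] at hx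
    have := nontrivial_X_pow_sub_C (expChar_pos k p).ne' ω
    rw [← (algebraMap k _).injective hx, eval₂_eq_sum_range]
    refine Subfield.sum_mem _ fun i _ => Subfield.mul_mem _ ?_ (Subfield.pow_mem _ ?_ _)
    · exact Subfield.subset_closure (Set.mem_insert_of_mem _ ⟨g.coeff i, rfl⟩)
    · exact Subfield.subset_closure (Set.mem_insert _ _)
  · refine Subfield.closure_le.2 (Set.insert_subset ?_ (Set.range_subset_iff.2 fun a => ?_))
    · exact ⟨root _, root_X_pow_sub_C_pow p ω⟩
    · exact ⟨algebraMap k _ a, (map_pow _ _ _).symm⟩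

noncomputable def algEquivOfEqAddPow {ω ω' c : k} (h : ω' = ω + c ^ p) :
    AdjoinRoot (X ^ p - C ω) ≃ₐ[k] AdjoinRoot (X ^ p - C ω') :=
  AlgEquiv.ofAlgHom
    (liftOfPowEq (root _ - algebraMap k _ c) (by
      rw [sub_pow_expChar, root_X_pow_sub_C_pow, ← algebraMap_eq, ← map_pow, ← map_sub, h,
        add_sub_cancel_right]))
    (liftOfPowEq (root _ + algebraMap k _ c) (by
      rw [add_pow_expChar, root_X_pow_sub_C_pow, ← algebraMap_eq, ← map_pow, ← map_add, h]))
    (algHom_ext (by simp only [AlgHom.comp_apply, liftOfPowEq_root, map_add,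
      AlgHom.commutes, sub_add_cancel, AlgHom.id_apply]))
    (algHom_ext (by simp only [AlgHom.comp_apply, liftOfPowEq_root, map_sub,
      AlgHom.commutes, add_sub_cancel_right, AlgHom.id_apply]))

end AdjoinRoot

theorem closure_insert_range_pow_of_mem {k : Type*} [Field k] {p : ℕ} [ExpChar k p] {ω : k}
    (hω : ω ∈ Set.range fun x : k => x ^ p) :
    Subfield.closure (insert ω (Set.range fun x : k => x ^ p)) = (frobenius k p).fieldRange := by
  rw [Set.insert_eq_of_mem hω]
  change Subfield.closure (Set.range (frobenius k p)) = _
  rw [← RingHom.coe_fieldRange, Subfield.closure_eq]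

open AdjoinRoot in
/-- The `k`-algebras `k[t]/(t^p - ω)` and `k[t']/(t'^p - ω')` are isomorphic if and
only if the subfields `k^p(ω)` and `k^p(ω')` of `k` coincide. -/
theorem stmt17 {k : Type*} [Field k] (p : ℕ) [Fact p.Prime] [CharP k p] (ω ω' : k) :
    Nonempty (AdjoinRoot (Polynomial.X ^ p - Polynomial.C ω) ≃ₐ[k]
      AdjoinRoot (Polynomial.X ^ p - Polynomial.C ω')) ↔
    Subfield.closure (insert ω (Set.range fun x : k => x ^ p)) =
      Subfield.closure (insert ω' (Set.range fun x : k => x ^ p)) := by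
  constructor
  · rintro ⟨e⟩
    simpa only [pthPowerSubfield_X_pow_sub_C] using pthPowerSubfield_congr (p := p) e
  intro h
  have hω' : ω' ∈ Subfield.closure (insert ω (Set.range fun x : k => x ^ p)) := by
    rw [h]; exact Subfield.subset_closure (Set.mem_insert _ _)
  by_cases hpow : ω' ∈ Set.range fun x : k => x ^ p
  · obtain ⟨a, rfl⟩ : ω ∈ (frobenius k p).fieldRange := by
      rw [← closure_insert_range_pow_of_mem hpow, ← h]
      exact Subfield.subset_closure (Set.mem_insert _ _)
    obtain ⟨b, rfl⟩ := hpow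
    -- both algebras are translates of `k[t]/(t^p)`
    exact ⟨(algEquivOfEqAddPow (zero_add _).symm).symm.trans
      (algEquivOfEqAddPow (zero_add _).symm)⟩
  · rw [← pthPowerSubfield_X_pow_sub_C] at hω'
    obtain ⟨x, hx⟩ := mem_pthPowerSubfield.1 hω'
    have hirr := X_pow_sub_C_irreducible_of_prime Fact.out (by simpa using hpow)
    exact (nonempty_algEquiv_of_pow_eq hirr x hx).map AlgEquiv.symm
end
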